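/- Let n, m be positive integers, equip M_n and M_m with their normalised traces tr_n and tr_m, and let e ∈ M_n and f ∈ M_m be orthogonal projections. Then β(e ⊗ f) = γ(e ⊗ f) = min{tr_n(e), tr_m(f)}, where β and γ are taken with respect to the states (tr_n, tr_m). -/

import Mathlib

open scoped ComplexOrder Kronecker Matrix
open Filter

noncomputable section

abbrev Mat (k : ℕ) := Matrix (Fin k) (Fin k) ℂ
abbrev Mat2 (n m : ℕ) := Matrix (Fin n × Fin m) (Fin n × Fin m) ℂ

/-- A state on a matrix algebra: a unital positive linear functional. -/
def IsState {ι : Type*} [Fintype ι] [DecidableEq ι] (ω : Matrix ι ι ℂ →ₗ[ℂ] ℂ) : Prop :=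
  ω 1 = 1 ∧ ∀ x, 0 ≤ ω (xᴴ * x)

/-- Loewner order: `A ≤ B` iff `B - A` is positive semidefinite. -/
def Loewner {ι : Type*} [Fintype ι] (A B : Matrix ι ι ℂ) : Prop := (B - A).PosSemidef

/-- An orthogonal projection: a hermitian idempotent. -/
def IsProjM {ι : Type*} [Fintype ι] (p : Matrix ι ι ℂ) : Prop := p.IsHermitian ∧ p * p = p

/-- A coupling of states `φ` and `ψ`. -/
def IsCoupling {n m : ℕ} (φ : Mat n →ₗ[ℂ] ℂ) (ψ : Mat m →ₗ[ℂ] ℂ)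
    (σ : Mat2 n m →ₗ[ℂ] ℂ) : Prop :=
  IsState σ ∧ (∀ a : Mat n, σ (a ⊗ₖ (1 : Mat m)) = φ a) ∧
    (∀ b : Mat m, σ ((1 : Mat n) ⊗ₖ b) = ψ b)

def alpha {n m : ℕ} (φ : Mat n →ₗ[ℂ] ℂ) (ψ : Mat m →ₗ[ℂ] ℂ) (T : Mat2 n m) : ℝ :=
  sSup {r : ℝ | ∃ σ, IsCoupling φ ψ σ ∧ (σ T).re = r}

def beta {n m : ℕ} (φ : Mat n →ₗ[ℂ] ℂ) (ψ : Mat m →ₗ[ℂ] ℂ) (T : Mat2 n m) : ℝ :=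
  sInf {r : ℝ | ∃ (a : Mat n) (b : Mat m), a.PosSemidef ∧ b.PosSemidef ∧
      Loewner T (a ⊗ₖ (1 : Mat m) + (1 : Mat n) ⊗ₖ b) ∧ (φ a + ψ b).re = r}

/-- For commuting projections `p ⊗ 1` and `1 ⊗ q`, the projection onto the sum of their ranges is
`p ⊗ 1 + 1 ⊗ q - p ⊗ q`. -/
def gamma {n m : ℕ} (φ : Mat n →ₗ[ℂ] ℂ) (ψ : Mat m →ₗ[ℂ] ℂ) (T : Mat2 n m) : ℝ :=
  sInf {r : ℝ | ∃ (p : Mat n) (q : Mat m), IsProjM p ∧ IsProjM q ∧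
      Loewner T (p ⊗ₖ (1 : Mat m) + (1 : Mat n) ⊗ₖ q - p ⊗ₖ q) ∧ (φ p + ψ q).re = r}

/-- The normalised trace, as a state on `M_k`. -/
def ntr (k : ℕ) : Mat k →ₗ[ℂ] ℂ := (k : ℂ)⁻¹ • Matrix.traceLinearMap (Fin k) ℂ ℂ


section AuxStmt6
open Matrix

variable {ι : Type*} [Fintype ι] [DecidableEq ι]

lemma trace_nonneg_of_psd' {A : Matrix ι ι ℂ} (hA : A.PosSemidef) : 0 ≤ A.trace := by
  rw [Matrix.trace]
  apply Finset.sum_nonneg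
  intro i _
  exact hA.diag_nonneg

lemma trace_re_nonneg' {A : Matrix ι ι ℂ} (hA : A.PosSemidef) :
    0 ≤ A.trace.re ∧ A.trace.im = 0 := by
  have h := trace_nonneg_of_psd' hA
  rw [Complex.le_def] at h
  exact ⟨by simpa using h.1, by simpa using h.2.symm⟩

lemma proj_psd' {p : Matrix ι ι ℂ} (hp : IsProjM p) : p.PosSemidef := by
  have := Matrix.posSemidef_conjTranspose_mul_self p
  rwa [hp.1, hp.2] at this

lemma proj_compl' {p : Matrix ι ι ℂ} (hp : IsProjM p) : IsProjM (1 - p) := by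
  refine ⟨(Matrix.isHermitian_one).sub hp.1, ?_⟩
  simp only [Matrix.sub_mul, Matrix.mul_sub, one_mul, mul_one, hp.2]
  abel

lemma trace_mul_nonneg_psd' {A B : Matrix ι ι ℂ} (hA : A.PosSemidef) (hB : B.PosSemidef) :
    0 ≤ (A * B).trace := by
  open scoped MatrixOrder in
  obtain ⟨C, rfl⟩ := CStarAlgebra.nonneg_iff_eq_star_mul_self.mp hA.nonneg
  rw [Matrix.star_eq_conjTranspose, Matrix.mul_assoc, Matrix.trace_mul_comm]
  exact trace_nonneg_of_psd' (hB.mul_mul_conjTranspose_same C)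

end AuxStmt6

section KronAux
open Matrix

lemma kron_conjT' {n m : ℕ} (A : Mat n) (B : Mat m) : (A ⊗ₖ B)ᴴ = Aᴴ ⊗ₖ Bᴴ := by
  ext ⟨i, j⟩ ⟨i', j'⟩
  simp [Matrix.conjTranspose_apply, Matrix.kroneckerMap_apply, star_mul']

lemma kron_sub_right' {n m : ℕ} (A : Mat n) (B C : Mat m) :
    A ⊗ₖ (B - C) = A ⊗ₖ B - A ⊗ₖ C := by
  ext ⟨i, j⟩ ⟨i', j'⟩
  simp [Matrix.kroneckerMap_apply, Matrix.sub_apply, mul_sub]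

lemma kron_sub_left' {n m : ℕ} (A B : Mat n) (C : Mat m) :
    (A - B) ⊗ₖ C = A ⊗ₖ C - B ⊗ₖ C := by
  ext ⟨i, j⟩ ⟨i', j'⟩
  simp [Matrix.kroneckerMap_apply, Matrix.sub_apply, sub_mul]

lemma psd_kron' {n m : ℕ} {A : Mat n} {B : Mat m}
    (hA : A.PosSemidef) (hB : B.PosSemidef) : (A ⊗ₖ B).PosSemidef := by
  exact hA.kronecker hB

lemma ntr_re' {k : ℕ} (x : Mat k) : ((ntr k) x).re = (k : ℝ)⁻¹ * x.trace.re := by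
  have h : ((ntr k) x) = (k : ℂ)⁻¹ * x.trace := rfl
  rw [h, show ((k : ℂ)⁻¹) = (((k : ℝ)⁻¹ : ℝ) : ℂ) by push_cast; ring, Complex.re_ofReal_mul]

end KronAux

lemma scalar_one' {S T A B A' B' u v : ℝ} (hv : 0 < v)
    (hT : 0 ≤ T) (hA' : 0 ≤ A') (hB' : 0 ≤ B') (hA : A' ≤ A) (hB : B' ≤ B)
    (hu : 0 < u) (hkey : S * T ≤ A' * T + S * B') (hc : u * S ≤ v * T) :
    u * S ≤ u * A + v * B := by
  rcases hT.eq_or_lt with hT0 | hT0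
  · nlinarith [mul_nonneg hu.le (hA'.trans hA), mul_nonneg hv.le (hB'.trans hB)]
  · have h1 : u * (S * T) ≤ u * (A' * T + S * B') := mul_le_mul_of_nonneg_left hkey hu.le
    have h2 : (u * S) * B' ≤ (v * T) * B' := mul_le_mul_of_nonneg_right hc hB'
    have h3 : u * (A' * T) ≤ u * (A * T) :=
      mul_le_mul_of_nonneg_left (mul_le_mul_of_nonneg_right hA hT) hu.le
    have h4 : (v * T) * B' ≤ (v * T) * B := mul_le_mul_of_nonneg_left hB (by positivity)
    have h5 : (u * S) * T ≤ (u * A + v * B) * T := by nlinarith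
    exact le_of_mul_le_mul_right h5 hT0

lemma scalar_aux' {S T A B A' B' u v : ℝ} (hu : 0 < u) (hv : 0 < v)
    (hS : 0 ≤ S) (hT : 0 ≤ T) (hA' : 0 ≤ A') (hB' : 0 ≤ B') (hA : A' ≤ A) (hB : B' ≤ B)
    (hkey : S * T ≤ A' * T + S * B') :
    min (u * S) (v * T) ≤ u * A + v * B := by
  rcases le_total (u * S) (v * T) with hc | hc
  · exact (min_le_left _ _).trans (scalar_one' hv hT hA' hB' hA hB hu hkey hc)
  · have := scalar_one' hu hS hB' hA' hB hA hv (by nlinarith) hc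
    exact (min_le_right _ _).trans (by linarith)

lemma lower_bound' {n m : ℕ} (hn : 0 < n) (hm : 0 < m)
    {e : Mat n} {f : Mat m} (he : IsProjM e) (hf : IsProjM f)
    {a : Mat n} {b : Mat m} (ha : a.PosSemidef) (hb : b.PosSemidef)
    (h : (a ⊗ₖ (1 : Mat m) + (1 : Mat n) ⊗ₖ b - e ⊗ₖ f).PosSemidef) :
    min ((ntr n) e).re ((ntr m) f).re ≤ ((ntr n) a).re + ((ntr m) b).re := by
  have hEH : (e ⊗ₖ f)ᴴ = e ⊗ₖ f := by rw [kron_conjT', he.1, hf.1]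
  have hcomp := h.conjTranspose_mul_mul_same (e ⊗ₖ f)
  rw [hEH] at hcomp
  have key : (e ⊗ₖ f) * (a ⊗ₖ (1 : Mat m) + (1 : Mat n) ⊗ₖ b - e ⊗ₖ f) * (e ⊗ₖ f)
      = (e * a * e) ⊗ₖ f + e ⊗ₖ (f * b * f) - e ⊗ₖ f := by
    simp only [Matrix.mul_sub, Matrix.sub_mul, Matrix.mul_add, Matrix.add_mul,
      ← Matrix.mul_kronecker_mul, Matrix.mul_one, Matrix.one_mul, he.2, hf.2]
  rw [key] at hcomp
  have h1 := trace_nonneg_of_psd' hcomp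
  rw [Matrix.trace_sub, Matrix.trace_add, Matrix.trace_kronecker, Matrix.trace_kronecker,
    Matrix.trace_kronecker] at h1
  have he_psd := proj_psd' he
  have hf_psd := proj_psd' hf
  have heae : (e * a * e).PosSemidef := by
    have := ha.conjTranspose_mul_mul_same e; rwa [he.1] at this
  have hfbf : (f * b * f).PosSemidef := by
    have := hb.conjTranspose_mul_mul_same f; rwa [hf.1] at this
  obtain ⟨hSre, hSim⟩ := trace_re_nonneg' he_psd
  obtain ⟨hTre, hTim⟩ := trace_re_nonneg' hf_psd
  obtain ⟨hA're, hA'im⟩ := trace_re_nonneg' heae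
  obtain ⟨hB're, hB'im⟩ := trace_re_nonneg' hfbf
  have heq : (e * a * e).trace = (e * a).trace := by
    rw [Matrix.trace_mul_cycle, he.2]
  have hfq : (f * b * f).trace = (f * b).trace := by
    rw [Matrix.trace_mul_cycle, hf.2]
  have hA_le : (e * a * e).trace.re ≤ a.trace.re := by
    have h2 := trace_mul_nonneg_psd' (proj_psd' (proj_compl' he)) ha
    rw [Matrix.sub_mul, one_mul, Matrix.trace_sub, Complex.le_def] at h2
    have := h2.1
    simp only [Complex.zero_re, Complex.sub_re] at this
    rw [heq]; linarith
  have hB_le : (f * b * f).trace.re ≤ b.trace.re := by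
    have h2 := trace_mul_nonneg_psd' (proj_psd' (proj_compl' hf)) hb
    rw [Matrix.sub_mul, one_mul, Matrix.trace_sub, Complex.le_def] at h2
    have := h2.1
    simp only [Complex.zero_re, Complex.sub_re] at this
    rw [hfq]; linarith
  rw [Complex.le_def] at h1
  have h1' := h1.1
  simp only [Complex.zero_re, Complex.add_re, Complex.sub_re, Complex.mul_re,
    hSim, hTim, hA'im, hB'im, mul_zero, zero_mul, sub_zero] at h1'
  rw [ntr_re', ntr_re', ntr_re', ntr_re']
  exact scalar_aux' (inv_pos.mpr (by exact_mod_cast hn)) (inv_pos.mpr (by exact_mod_cast hm))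
    hSre hTre hA're hB're hA_le hB_le (by linarith)


/-- Proposition 2.9 (second part): with respect to the normalised traces,
`β(e ⊗ f) = γ(e ⊗ f) = min{tr_n(e), tr_m(f)}` for projections `e`, `f`. -/
theorem stmt6 {n m : ℕ} (hn : 0 < n) (hm : 0 < m)
    (e : Mat n) (f : Mat m) (he : IsProjM e) (hf : IsProjM f) :
    beta (ntr n) (ntr m) (e ⊗ₖ f) = min ((ntr n) e).re ((ntr m) f).re ∧
    gamma (ntr n) (ntr m) (e ⊗ₖ f) = min ((ntr n) e).re ((ntr m) f).re := by
  have he_psd := proj_psd' he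
  have hf_psd := proj_psd' hf
  have hproj0n : IsProjM (0 : Mat n) := ⟨Matrix.isHermitian_zero, by simp⟩
  have hproj0m : IsProjM (0 : Mat m) := ⟨Matrix.isHermitian_zero, by simp⟩
  have hpsd1 : (e ⊗ₖ (1 : Mat m) - e ⊗ₖ f).PosSemidef := by
    rw [← kron_sub_right']
    exact psd_kron' he_psd (proj_psd' (proj_compl' hf))
  have hpsd2 : ((1 : Mat n) ⊗ₖ f - e ⊗ₖ f).PosSemidef := by
    rw [← kron_sub_left']
    exact psd_kron' (proj_psd' (proj_compl' he)) hf_psd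
  set M := min ((ntr n) e).re ((ntr m) f).re with hM
  have hbmem : M ∈ {r : ℝ | ∃ (a : Mat n) (b : Mat m), a.PosSemidef ∧ b.PosSemidef ∧
      Loewner (e ⊗ₖ f) (a ⊗ₖ (1 : Mat m) + (1 : Mat n) ⊗ₖ b) ∧
      ((ntr n) a + (ntr m) b).re = r} := by
    rcases le_total ((ntr n) e).re ((ntr m) f).re with hc | hc
    · refine ⟨e, 0, he_psd, Matrix.PosSemidef.zero, ?_, ?_⟩
      · show (e ⊗ₖ (1 : Mat m) + (1 : Mat n) ⊗ₖ (0 : Mat m) - e ⊗ₖ f).PosSemidef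
        rw [Matrix.kronecker_zero, add_zero]
        exact hpsd1
      · simp [hM, min_eq_left hc]
    · refine ⟨0, f, Matrix.PosSemidef.zero, hf_psd, ?_, ?_⟩
      · show ((0 : Mat n) ⊗ₖ (1 : Mat m) + (1 : Mat n) ⊗ₖ f - e ⊗ₖ f).PosSemidef
        rw [Matrix.zero_kronecker, zero_add]
        exact hpsd2
      · simp [hM, min_eq_right hc]
  have hgmem : M ∈ {r : ℝ | ∃ (p : Mat n) (q : Mat m), IsProjM p ∧ IsProjM q ∧
      Loewner (e ⊗ₖ f) (p ⊗ₖ (1 : Mat m) + (1 : Mat n) ⊗ₖ q - p ⊗ₖ q) ∧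
      ((ntr n) p + (ntr m) q).re = r} := by
    rcases le_total ((ntr n) e).re ((ntr m) f).re with hc | hc
    · refine ⟨e, 0, he, hproj0m, ?_, ?_⟩
      · show (e ⊗ₖ (1 : Mat m) + (1 : Mat n) ⊗ₖ (0 : Mat m) - e ⊗ₖ (0 : Mat m)
            - e ⊗ₖ f).PosSemidef
        rw [Matrix.kronecker_zero, Matrix.kronecker_zero, add_zero, sub_zero]
        exact hpsd1
      · simp [hM, min_eq_left hc]
    · refine ⟨0, f, hproj0n, hf, ?_, ?_⟩
      · show ((0 : Mat n) ⊗ₖ (1 : Mat m) + (1 : Mat n) ⊗ₖ f - (0 : Mat n) ⊗ₖ f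
            - e ⊗ₖ f).PosSemidef
        rw [Matrix.zero_kronecker, Matrix.zero_kronecker, zero_add, sub_zero]
        exact hpsd2
      · simp [hM, min_eq_right hc]
  have hblb : ∀ r ∈ {r : ℝ | ∃ (a : Mat n) (b : Mat m), a.PosSemidef ∧ b.PosSemidef ∧
      Loewner (e ⊗ₖ f) (a ⊗ₖ (1 : Mat m) + (1 : Mat n) ⊗ₖ b) ∧
      ((ntr n) a + (ntr m) b).re = r}, M ≤ r := by
    rintro r ⟨a, b, ha, hb, hL, rfl⟩
    have hL' : (a ⊗ₖ (1 : Mat m) + (1 : Mat n) ⊗ₖ b - e ⊗ₖ f).PosSemidef := hL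
    have := lower_bound' hn hm he hf ha hb hL'
    rw [hM, Complex.add_re]
    exact this
  have hglb : ∀ r ∈ {r : ℝ | ∃ (p : Mat n) (q : Mat m), IsProjM p ∧ IsProjM q ∧
      Loewner (e ⊗ₖ f) (p ⊗ₖ (1 : Mat m) + (1 : Mat n) ⊗ₖ q - p ⊗ₖ q) ∧
      ((ntr n) p + (ntr m) q).re = r}, M ≤ r := by
    rintro r ⟨p, q, hp, hq, hL, rfl⟩
    have hpq : (p ⊗ₖ q).PosSemidef := psd_kron' (proj_psd' hp) (proj_psd' hq)
    have hL0 : (p ⊗ₖ (1 : Mat m) + (1 : Mat n) ⊗ₖ q - p ⊗ₖ q - e ⊗ₖ f).PosSemidef := hL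
    have hL' : (p ⊗ₖ (1 : Mat m) + (1 : Mat n) ⊗ₖ q - e ⊗ₖ f).PosSemidef := by
      have heq2 : p ⊗ₖ (1 : Mat m) + (1 : Mat n) ⊗ₖ q - e ⊗ₖ f
          = (p ⊗ₖ (1 : Mat m) + (1 : Mat n) ⊗ₖ q - p ⊗ₖ q - e ⊗ₖ f) + p ⊗ₖ q := by abel
      rw [heq2]
      exact hL0.add hpq
    have := lower_bound' hn hm he hf (proj_psd' hp) (proj_psd' hq) hL'
    rw [hM, Complex.add_re]
    exact this
  constructor
  · exact le_antisymm (csInf_le ⟨M, fun r hr => hblb r hr⟩ hbmem)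
      (le_csInf ⟨M, hbmem⟩ hblb)
  · exact le_antisymm (csInf_le ⟨M, fun r hr => hglb r hr⟩ hgmem)
      (le_csInf ⟨M, hgmem⟩ hglb)

end
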